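/- Luce's theorem: a random choice rule p satisfies Positivity (p(a,{a,b}) > 0 for all a,b) and the Choice Axiom if and only if there exists α : X → ℝ such that p(a,A) = e^{α(a)}/Σ_{b∈A} e^{α(b)} for all A ∈ 𝒜 and a ∈ A. -/

import Mathlib

/-!
Fix a reference alternative `a₀` and weigh every `a` by the odds
`w(a) = p({a,a₀}, a) / p({a,a₀}, a₀)`. Applying the Choice Axiom to a pair `{a, b} ⊆ A` gives
`p(A, a) · p({a,b}, b) = p(A, b) · p({a,b}, a)`; this transfers positivity from some alternative
of `A` (they sum to `1`) to all of `A`, and for `b = a₀` it reads `p(A, a) = p(A, a₀) · w(a)`.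
For an arbitrary menu `A`, a second application of the axiom, to `A ⊆ A ∪ {a₀}`, makes `p(A, ·)`
proportional to `w` on `A`, and normalisation forces the constant to be `1 / Σ_{b ∈ A} w(b)`;
take `α = log w`. Conversely, ratios `w(a) / Σ w` satisfy the Choice Axiom because the
normalising sums cancel.
-/

open Finset

theorem eq_div_sum_of_eq_mul {ι : Type*} {A : Finset ι} {f w : ι → ℝ} {c : ℝ}
    (hf : ∀ a ∈ A, f a = c * w a) (hsum : ∑ a ∈ A, f a = 1) {a : ι} (ha : a ∈ A) :
    f a = w a / ∑ b ∈ A, w b := by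
  have hc : c * ∑ b ∈ A, w b = 1 := by
    rw [mul_sum, ← hsum]
    exact (sum_congr rfl hf).symm
  rw [hf a ha, div_eq_inv_mul, ← eq_inv_of_mul_eq_one_left hc]

namespace RandomChoice

variable {X : Type*}

def ChoiceAxiom (p : Finset X → X → ℝ) : Prop :=
  ∀ A B : Finset X, B.Nonempty → B ⊆ A → ∀ a ∈ B, p A a = p B a * ∑ b ∈ B, p A b

def IsLuceRule (p : Finset X → X → ℝ) (w : X → ℝ) : Prop :=
  ∀ A : Finset X, A.Nonempty → ∀ a ∈ A, p A a = w a / ∑ b ∈ A, w b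

theorem IsLuceRule.choiceAxiom {p : Finset X → X → ℝ} {w : X → ℝ} (hw : ∀ a, 0 < w a)
    (hp : IsLuceRule p w) : ChoiceAxiom p := by
  intro A B hB hBA a ha
  have hA : A.Nonempty := hB.mono hBA
  have hB_pos : 0 < ∑ b ∈ B, w b := sum_pos (fun b _ => hw b) hB
  rw [hp A hA a (hBA ha), hp B hB a ha, sum_congr rfl fun b hb => hp A hA b (hBA hb), ← sum_div]
  field_simp

variable [DecidableEq X]

def Positivity (p : Finset X → X → ℝ) : Prop :=
  ∀ a b : X, 0 < p {a, b} a

noncomputable def pairWeight (p : Finset X → X → ℝ) (a₀ a : X) : ℝ :=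
  p {a, a₀} a / p {a, a₀} a₀

variable {p : Finset X → X → ℝ}

theorem IsLuceRule.positivity {w : X → ℝ} (hw : ∀ a, 0 < w a) (hp : IsLuceRule p w) :
    Positivity p := by
  intro a b
  rw [hp {a, b} (insert_nonempty _ _) a (mem_insert_self _ _)]
  exact div_pos (hw a) (sum_pos (fun b _ => hw b) (insert_nonempty _ _))

theorem ChoiceAxiom.mul_pair_eq (hC : ChoiceAxiom p) {A : Finset X} {a b : X}
    (ha : a ∈ A) (hb : b ∈ A) : p A a * p {a, b} b = p A b * p {a, b} a := by
  have hsub : ({a, b} : Finset X) ⊆ A := insert_subset ha (singleton_subset_iff.2 hb)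
  rw [hC A {a, b} (insert_nonempty _ _) hsub a (mem_insert_self _ _),
    hC A {a, b} (insert_nonempty _ _) hsub b (mem_insert_of_mem (mem_singleton_self _))]
  ring

theorem Positivity.pos_right (hP : Positivity p) (a b : X) : 0 < p {a, b} b := by
  rw [pair_comm]
  exact hP b a

theorem ChoiceAxiom.pos_of_mem (hP : Positivity p) (hC : ChoiceAxiom p) {A : Finset X}
    (hsum : ∑ b ∈ A, p A b = 1) {a : X} (ha : a ∈ A) : 0 < p A a := by
  obtain ⟨c, hc, hpc⟩ : ∃ c ∈ A, 0 < p A c := by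
    have : ∑ c ∈ A, (0 : ℝ) < ∑ c ∈ A, p A c := by simp [hsum]
    simpa using exists_lt_of_sum_lt this
  have hprod : 0 < p A a * p {a, c} c := by
    rw [hC.mul_pair_eq ha hc]
    exact mul_pos hpc (hP a c)
  exact pos_of_mul_pos_left hprod (hP.pos_right a c).le

theorem pairWeight_pos (hP : Positivity p) (a₀ a : X) : 0 < pairWeight p a₀ a :=
  div_pos (hP a a₀) (hP.pos_right a a₀)

theorem ChoiceAxiom.mul_pairWeight (hP : Positivity p) (hC : ChoiceAxiom p) {A : Finset X}
    {a₀ a : X} (h₀ : a₀ ∈ A) (ha : a ∈ A) : p A a₀ * pairWeight p a₀ a = p A a := by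
  rw [pairWeight, mul_div_assoc', div_eq_iff (hP.pos_right a a₀).ne']
  exact (hC.mul_pair_eq ha h₀).symm

theorem ChoiceAxiom.exists_eq_mul_pairWeight (hP : Positivity p) (hC : ChoiceAxiom p)
    (hsum : ∀ A : Finset X, A.Nonempty → ∑ a ∈ A, p A a = 1) (a₀ : X) (A : Finset X) :
    ∃ c : ℝ, ∀ a ∈ A, p A a = c * pairWeight p a₀ a := by
  rcases A.eq_empty_or_nonempty with rfl | hA
  · exact ⟨0, by simp⟩
  set T := insert a₀ A
  have hT : ∀ b ∈ T, 0 < p T b := fun b hb => hC.pos_of_mem hP (hsum T (insert_nonempty _ _)) hb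
  have hs : 0 < ∑ b ∈ A, p T b := sum_pos (fun b hb => hT b (mem_insert_of_mem hb)) hA
  refine ⟨p T a₀ / ∑ b ∈ A, p T b, fun a ha => ?_⟩
  have hTa : p T a = p A a * ∑ b ∈ A, p T b := hC T A hA (subset_insert _ _) a ha
  rw [← hC.mul_pairWeight hP (mem_insert_self _ _) (mem_insert_of_mem ha)] at hTa
  field_simp
  linarith

theorem ChoiceAxiom.isLuceRule_pairWeight (hP : Positivity p) (hC : ChoiceAxiom p)
    (hsum : ∀ A : Finset X, A.Nonempty → ∑ a ∈ A, p A a = 1) (a₀ : X) :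
    IsLuceRule p (pairWeight p a₀) := by
  intro A hA a ha
  obtain ⟨c, hc⟩ := hC.exists_eq_mul_pairWeight hP hsum a₀ A
  exact eq_div_sum_of_eq_mul hc (hsum A hA) ha

end RandomChoice

open RandomChoice in
theorem luce_theorem_general
    {X : Type*} [DecidableEq X] (p : Finset X → X → ℝ)
    (hsum : ∀ A : Finset X, A.Nonempty → ∑ a ∈ A, p A a = 1) :
    ((∀ a b : X, 0 < p {a, b} a) ∧
      (∀ A B : Finset X, B.Nonempty → B ⊆ A → ∀ a ∈ B,
        p A a = p B a * ∑ b ∈ B, p A b)) ↔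
    (∃ α : X → ℝ, ∀ A : Finset X, A.Nonempty → ∀ a ∈ A,
      p A a = Real.exp (α a) / ∑ b ∈ A, Real.exp (α b)) := by
  constructor
  · rintro ⟨hP, hC⟩
    rcases isEmpty_or_nonempty X with hX | ⟨⟨a₀⟩⟩
    · exact ⟨0, fun _ _ a _ => isEmptyElim a⟩
    refine ⟨fun a => Real.log (pairWeight p a₀ a), ?_⟩
    simpa only [IsLuceRule, Real.exp_log (pairWeight_pos hP a₀ _)] using
      ChoiceAxiom.isLuceRule_pairWeight hP hC hsum a₀
  · rintro ⟨α, hα⟩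
    exact ⟨IsLuceRule.positivity (fun a => Real.exp_pos (α a)) hα,
      IsLuceRule.choiceAxiom (fun a => Real.exp_pos (α a)) hα⟩

/-- Luce's theorem: a random choice rule satisfies Positivity and the Choice Axiom
iff it has the Luce form `p(a,A) = e^{α(a)}/Σ_{b∈A} e^{α(b)}`. -/
theorem luce_theorem
    {X : Type*} [DecidableEq X] (p : Finset X → X → ℝ)
    (hpos : ∀ A a, 0 ≤ p A a)
    (hout : ∀ A a, a ∉ A → p A a = 0)
    (hsum : ∀ A : Finset X, A.Nonempty → ∑ a ∈ A, p A a = 1) :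
    ((∀ a b : X, 0 < p {a, b} a) ∧
      (∀ A B : Finset X, B.Nonempty → B ⊆ A → ∀ a ∈ B,
        p A a = p B a * ∑ b ∈ B, p A b)) ↔
    (∃ α : X → ℝ, ∀ A : Finset X, A.Nonempty → ∀ a ∈ A,
      p A a = Real.exp (α a) / ∑ b ∈ A, Real.exp (α b)) :=
  luce_theorem_general p hsum
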